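/- Let α ≠ 0 be a real constant, δ ∈ {1, −1}, and η ∈ ℝ. Let U ⊆ ℝ² be open and let u, v : U → ℝ be smooth functions satisfying the coupled mKdV-type system u_t = −u_xxx + δα²(u² + v²)u_x and v_t = −v_xxx + δα²(u² + v²)v_x on U. Then the functions f̂₁₁ = (√6/3)αu, f̂₂₁ = (√6/3)αv, f̂₃₁ = η, f̂₁₂ = −(√6/3)α(u_xx + η·v_x) + δ(√6/9)α·u·(α²u² + α²v² + 3δη²), f̂₂₂ = −(√6/3)α(v_xx − η·u_x) + δ(√6/9)α·v·(α²u² + α²v² + 3δη²), f̂₃₂ = (2/3)δα²(v·u_x − u·v_x) + δ(η/3)(α²u² + α²v² + 3δη²) satisfy, at every point of U, the local structure equations: −∂_t f̂₁₁ + ∂_x f̂₁₂ = f̂₃₁f̂₂₂ − f̂₃₂f̂₂₁, −∂_t f̂₂₁ + ∂_x f̂₂₂ = f̂₁₁f̂₃₂ − f̂₁₂f̂₃₁, −∂_t f̂₃₁ + ∂_x f̂₃₂ = δ(f̂₁₁f̂₂₂ − f̂₁₂f̂₂₁). -/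

import Mathlib

/-- Partial derivative with respect to the first (space) variable. -/
noncomputable def px (f : ℝ × ℝ → ℝ) : ℝ × ℝ → ℝ := fun p => fderiv ℝ f p (1, 0)

/-- Partial derivative with respect to the second (time) variable. -/
noncomputable def pt (f : ℝ × ℝ → ℝ) : ℝ × ℝ → ℝ := fun p => fderiv ℝ f p (0, 1)

/-- The local structure equations of a surface of constant curvature `-δ`. -/
def StructEqs (δ : ℝ) (g11 g12 g21 g22 g31 g32 : ℝ × ℝ → ℝ) (U : Set (ℝ × ℝ)) : Prop :=
  ∀ p ∈ U,
    -(pt g11 p) + px g12 p = g31 p * g22 p - g32 p * g21 p ∧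
    -(pt g21 p) + px g22 p = g11 p * g32 p - g12 p * g31 p ∧
    -(pt g31 p) + px g32 p = δ * (g11 p * g22 p - g12 p * g21 p)

section Aux

variable {f g : ℝ × ℝ → ℝ} {p : ℝ × ℝ}

lemma contDiffAt_px (hf : ContDiffAt ℝ (⊤ : ℕ∞) f p) : ContDiffAt ℝ (⊤ : ℕ∞) (px f) p := by
  have h : ContDiffAt ℝ (⊤ : ℕ∞) (fderiv ℝ f) p := hf.fderiv_right (by simp)
  exact h.clm_apply contDiffAt_const

lemma px_add (hf : DifferentiableAt ℝ f p) (hg : DifferentiableAt ℝ g p) :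
    px (fun q => f q + g q) p = px f p + px g p := by
  simp [px, fderiv_fun_add hf hg]

lemma px_sub (hf : DifferentiableAt ℝ f p) (hg : DifferentiableAt ℝ g p) :
    px (fun q => f q - g q) p = px f p - px g p := by
  simp [px, fderiv_fun_sub hf hg]

lemma px_mul (hf : DifferentiableAt ℝ f p) (hg : DifferentiableAt ℝ g p) :
    px (fun q => f q * g q) p = f p * px g p + g p * px f p := by
  simp [px, fderiv_fun_mul hf hg]

lemma px_const_mul (hg : DifferentiableAt ℝ g p) (c : ℝ) :
    px (fun q => c * g q) p = c * px g p := by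
  simp [px, fderiv_const_mul hg c]

lemma px_sq (hf : DifferentiableAt ℝ f p) :
    px (fun q => f q ^ 2) p = 2 * f p * px f p := by
  have : (fun q => f q ^ 2) = fun q => f q * f q := by funext q; ring
  rw [this, px_mul hf hf]; ring

lemma px_const (c : ℝ) : px (fun _ => c) p = 0 := by
  simp [px]

lemma pt_add (hf : DifferentiableAt ℝ f p) (hg : DifferentiableAt ℝ g p) :
    pt (fun q => f q + g q) p = pt f p + pt g p := by
  simp [pt, fderiv_fun_add hf hg]

lemma pt_const_mul (hg : DifferentiableAt ℝ g p) (c : ℝ) :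
    pt (fun q => c * g q) p = c * pt g p := by
  simp [pt, fderiv_const_mul hg c]

lemma pt_const (c : ℝ) : pt (fun _ => c) p = 0 := by
  simp [pt]

end Aux

/-- Every smooth solution of the coupled mKdV-type system
`u_t = -u_xxx + δ α² (u²+v²) u_x`, `v_t = -v_xxx + δ α² (u²+v²) v_x`
provides, via the stated associated functions with parameter `η`, a solution of
the structure equations with curvature `-δ`. -/
theorem coupled_mKdV_describes_pss_or_ss (α : ℝ) (hα : α ≠ 0) (δ : ℝ)
    (hδ : δ = 1 ∨ δ = -1) (η : ℝ) (U : Set (ℝ × ℝ)) (hU : IsOpen U)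
    (u v : ℝ × ℝ → ℝ) (hu : ContDiffOn ℝ (⊤ : ℕ∞) u U) (hv : ContDiffOn ℝ (⊤ : ℕ∞) v U)
    (hsys : ∀ p ∈ U,
      pt u p = -(px (px (px u)) p) + δ * α ^ 2 * (u p ^ 2 + v p ^ 2) * px u p ∧
      pt v p = -(px (px (px v)) p) + δ * α ^ 2 * (u p ^ 2 + v p ^ 2) * px v p) :
    StructEqs δ
      (fun p => (Real.sqrt 6 / 3) * α * u p)
      (fun p => -(Real.sqrt 6 / 3) * α * (px (px u) p + η * px v p)
        + δ * (Real.sqrt 6 / 9) * α * u p * (α ^ 2 * u p ^ 2 + α ^ 2 * v p ^ 2 + 3 * δ * η ^ 2))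
      (fun p => (Real.sqrt 6 / 3) * α * v p)
      (fun p => -(Real.sqrt 6 / 3) * α * (px (px v) p - η * px u p)
        + δ * (Real.sqrt 6 / 9) * α * v p * (α ^ 2 * u p ^ 2 + α ^ 2 * v p ^ 2 + 3 * δ * η ^ 2))
      (fun _ => η)
      (fun p => (2 / 3) * δ * α ^ 2 * (v p * px u p - u p * px v p)
        + δ * (η / 3) * (α ^ 2 * u p ^ 2 + α ^ 2 * v p ^ 2 + 3 * δ * η ^ 2))
      U := by
  intro p hp
  have hUp : U ∈ nhds p := hU.mem_nhds hp
  have hu0 : ContDiffAt ℝ (⊤ : ℕ∞) u p := hu.contDiffAt hUp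
  have hv0 : ContDiffAt ℝ (⊤ : ℕ∞) v p := hv.contDiffAt hUp
  have hu1 : ContDiffAt ℝ (⊤ : ℕ∞) (px u) p := contDiffAt_px hu0
  have hv1 : ContDiffAt ℝ (⊤ : ℕ∞) (px v) p := contDiffAt_px hv0
  have hu2 : ContDiffAt ℝ (⊤ : ℕ∞) (px (px u)) p := contDiffAt_px hu1
  have hv2 : ContDiffAt ℝ (⊤ : ℕ∞) (px (px v)) p := contDiffAt_px hv1
  have du0 : DifferentiableAt ℝ u p := hu0.differentiableAt (by simp)
  have dv0 : DifferentiableAt ℝ v p := hv0.differentiableAt (by simp)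
  have du1 : DifferentiableAt ℝ (px u) p := hu1.differentiableAt (by simp)
  have dv1 : DifferentiableAt ℝ (px v) p := hv1.differentiableAt (by simp)
  have du2 : DifferentiableAt ℝ (px (px u)) p := hu2.differentiableAt (by simp)
  have dv2 : DifferentiableAt ℝ (px (px v)) p := hv2.differentiableAt (by simp)
  obtain ⟨hut, hvt⟩ := hsys p hp
  have h6 : Real.sqrt 6 ^ 2 = 6 := Real.sq_sqrt (by norm_num)
  refine ⟨?_, ?_, ?_⟩ <;>
    simp (disch := fun_prop) only [px_add, px_sub, px_mul, px_const_mul, px_sq, px_const,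
      pt_const_mul, pt_const, hut, hvt] <;>
    rcases hδ with h | h <;> subst h
  · ring
  · ring
  · ring
  · ring
  · linear_combination (α ^ 2 / 9 * (u p * px (px v) p - v p * px (px u) p
          - η * (u p * px u p + v p * px v p))) * h6
  · linear_combination (-(α ^ 2 / 9) * (u p * px (px v) p - v p * px (px u) p
          - η * (u p * px u p + v p * px v p))) * h6
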